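/- arXiv:1606.07172 — 4 statements merged into one kernel-verified Lean document; each statement's English description precedes it below -/
import Mathlib

section
/- Let k > 0, 0 < ε ≤ k², and let x, y ≥ 0 be real numbers (representing ‖∇v‖² and ‖v‖² respectively). Then |(x − k² y) − i ε y| ≥ (ε / (4 k²)) (x + k² y). (This is the scalar inequality underlying the coercivity of the Helmholtz sesquilinear form with absorption in the wavenumber-weighted energy norm.) -/
/-!
With `c = ε / k²` ∈ (0, 1], `u = x` and `v = k² y`, the claim is `c (u + v) ≤ 4 |u - v - i c v|`.
The modulus dominates both `|u - v|` and `c v`: when `u ≤ 2v` the imaginary part already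
gives `c (u + v) ≤ 3 c v`, and when `u ≥ 2v` the real part gives `c (u + v) ≤ 2u ≤ 4 (u - v)`.
-/

lemma mul_add_le_four_mul_max_abs_sub {c u v : ℝ} (hc₀ : 0 ≤ c) (hc₁ : c ≤ 1) (hv : 0 ≤ v) :
    c * (u + v) ≤ 4 * max |u - v| (c * v) := by
  rcases le_total u (2 * v) with h | h
  · have : c * (u + v) ≤ 4 * (c * v) := by nlinarith
    exact this.trans (by gcongr; exact le_max_right _ _)
  · have : c * (u + v) ≤ 4 * |u - v| := by
      rw [abs_of_nonneg (by linarith)]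
      nlinarith
    exact this.trans (by gcongr; exact le_max_left _ _)

lemma Complex.max_abs_sub_I_mul_le_norm (a b : ℝ) :
    max |a| |b| ≤ ‖(a : ℂ) - Complex.I * b‖ := by
  have hre : ((a : ℂ) - Complex.I * b).re = a := by simp
  have him : ((a : ℂ) - Complex.I * b).im = -b := by simp
  refine max_le ?_ ?_
  · simpa only [hre] using Complex.abs_re_le_norm ((a : ℂ) - Complex.I * b)
  · simpa only [him, abs_neg] using Complex.abs_im_le_norm ((a : ℂ) - Complex.I * b)

theorem stmt0_general (k ε x y : ℝ) (hk : 0 < k) (hε : 0 < ε) (hεk : ε ≤ k ^ 2)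
    (hy : 0 ≤ y) :
    (ε / (4 * k ^ 2)) * (x + k ^ 2 * y) ≤
      ‖((x - k ^ 2 * y : ℝ) : ℂ) - Complex.I * ((ε * y : ℝ) : ℂ)‖ := by
  have hk₂ : 0 < k ^ 2 := by positivity
  have hc : ε / k ^ 2 ≤ 1 := (div_le_one hk₂).2 hεk
  have key := mul_add_le_four_mul_max_abs_sub (div_nonneg hε.le hk₂.le) hc
    (mul_nonneg hk₂.le hy) (u := x)
  have hcv : ε / k ^ 2 * (k ^ 2 * y) = ε * y := by field_simp
  rw [hcv] at key
  calc ε / (4 * k ^ 2) * (x + k ^ 2 * y) = ε / k ^ 2 * (x + k ^ 2 * y) / 4 := by ring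
    _ ≤ max |x - k ^ 2 * y| (ε * y) := by linarith
    _ = max |x - k ^ 2 * y| |ε * y| := by rw [abs_of_nonneg (mul_nonneg hε.le hy)]
    _ ≤ _ := Complex.max_abs_sub_I_mul_le_norm _ _

/-- Scalar inequality underlying coercivity of the Helmholtz sesquilinear form
with absorption in the wavenumber-weighted energy norm. -/
theorem stmt0 (k ε x y : ℝ) (hk : 0 < k) (hε : 0 < ε) (hεk : ε ≤ k ^ 2)
    (hx : 0 ≤ x) (hy : 0 ≤ y) :
    (ε / (4 * k ^ 2)) * (x + k ^ 2 * y) ≤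
      ‖((x - k ^ 2 * y : ℝ) : ℂ) - Complex.I * ((ε * y : ℝ) : ℂ)‖ :=
  stmt0_general k ε x y hk hε hεk hy
end

section
/- Let D be an n×n Hermitian positive definite complex matrix, inducing the inner product ⟨v, w⟩_D := w* D v on ℂⁿ. Let C be any n×n complex matrix. Then for every nonzero v ∈ ℂⁿ, setting w := D v, one has ⟨v, C v⟩_D / ⟨v, v⟩_D = conj(⟨w, C* w⟩_{D⁻¹} / ⟨w, w⟩_{D⁻¹}), where C* is the conjugate transpose of C and ⟨·,·⟩_{D⁻¹} is the inner product induced by D⁻¹. -/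
open Matrix
open scoped ComplexOrder

/-- The weighted inner product ⟨v, w⟩_E := w* E v on ℂⁿ
(linear in the first argument, conjugate-linear in the second). -/
noncomputable def ipW {n : ℕ} (E : Matrix (Fin n) (Fin n) ℂ) (v w : Fin n → ℂ) : ℂ :=
  star w ⬝ᵥ (E *ᵥ v)

/-- Field-of-values conjugation identity relating left and right preconditioning:
⟨v, Cv⟩_D / ⟨v,v⟩_D = conj(⟨w, C*w⟩_{D⁻¹} / ⟨w,w⟩_{D⁻¹}) with w = Dv. -/
theorem stmt5 {n : ℕ} (D : Matrix (Fin n) (Fin n) ℂ) (hD : D.PosDef)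
    (C : Matrix (Fin n) (Fin n) ℂ) (v : Fin n → ℂ) (hv : v ≠ 0) :
    ipW D v (C *ᵥ v) / ipW D v v =
      (starRingEnd ℂ)
        (ipW D⁻¹ (D *ᵥ v) (Cᴴ *ᵥ (D *ᵥ v)) / ipW D⁻¹ (D *ᵥ v) (D *ᵥ v)) := by
  have hinv : D⁻¹ *ᵥ (D *ᵥ v) = v := by
    rw [mulVec_mulVec, nonsing_inv_mul D ((isUnit_iff_isUnit_det D).mp hD.isUnit),
      one_mulVec]
  have hconj : ∀ a b : Fin n → ℂ, (starRingEnd ℂ) (star a ⬝ᵥ b) = star b ⬝ᵥ a := by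
    intro a b; simp [dotProduct, map_sum, mul_comm]
  rw [map_div₀]
  unfold ipW
  rw [hinv, hconj, hconj]
  congr 1
  rw [star_mulVec, ← dotProduct_mulVec]
end

section
/- Let D be an n×n Hermitian positive definite matrix and C an n×n complex matrix. Define the weighted numerical range W_D(C) := { ⟨v, C v⟩_D : v ∈ ℂⁿ, ‖v‖_D = 1 }, where ⟨v,w⟩_D = w* D v and ‖v‖_D = ⟨v,v⟩_D^{1/2}. Then W_{D⁻¹}(C*) = { conj(z) : z ∈ W_D(C) }, i.e. the numerical range of the Hermitian transpose with respect to the D⁻¹ inner product is the complex conjugate of the numerical range of C with respect to the D inner product. In particular dist(0, W_{D⁻¹}(C*)) = dist(0, W_D(C)). -/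
open Matrix
open scoped ComplexOrder

/-- The weighted numerical range W_E(C) := { ⟨v, Cv⟩_E : ‖v‖_E = 1 }. -/
noncomputable def numRange {n : ℕ} (E C : Matrix (Fin n) (Fin n) ℂ) : Set ℂ :=
  {z | ∃ v : Fin n → ℂ, ipW E v v = 1 ∧ z = ipW E v (C *ᵥ v)}

lemma key {n : ℕ} (A B : Matrix (Fin n) (Fin n) ℂ) (v : Fin n → ℂ) :
    star (A *ᵥ v) ⬝ᵥ (B *ᵥ v) = star v ⬝ᵥ ((Aᴴ * B) *ᵥ v) := by
  rw [star_mulVec, ← dotProduct_mulVec, mulVec_mulVec]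

lemma key_conj {n : ℕ} (M : Matrix (Fin n) (Fin n) ℂ) (v : Fin n → ℂ) :
    (starRingEnd ℂ) (star v ⬝ᵥ (M *ᵥ v)) = star v ⬝ᵥ (Mᴴ *ᵥ v) := by
  have : (starRingEnd ℂ) (star v ⬝ᵥ (M *ᵥ v)) = star (star v ⬝ᵥ (M *ᵥ v)) := rfl
  rw [this, star_dotProduct, star_star, star_mulVec, dotProduct_comm,
    dotProduct_comm, ← dotProduct_mulVec]

/-- W_{D⁻¹}(C*) is the complex conjugate of W_D(C); in particular they are at
the same distance from the origin. -/
theorem stmt6 {n : ℕ} (D : Matrix (Fin n) (Fin n) ℂ) (hD : D.PosDef)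
    (C : Matrix (Fin n) (Fin n) ℂ) :
    numRange D⁻¹ Cᴴ = (fun z => (starRingEnd ℂ) z) '' numRange D C ∧
      Metric.infDist 0 (numRange D⁻¹ Cᴴ) = Metric.infDist 0 (numRange D C) := by
  have hU : IsUnit D := hD.isUnit
  have hDi : D⁻¹ * D = 1 := nonsing_inv_mul D (isUnit_iff_isUnit_det D |>.1 hU)
  have hiD : D * D⁻¹ = 1 := mul_nonsing_inv D (isUnit_iff_isUnit_det D |>.1 hU)
  have hH : Dᴴ = D := hD.isHermitian
  have hHi : D⁻¹ᴴ = D⁻¹ := by rw [conjTranspose_nonsing_inv, hH]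
  have hmain : numRange D⁻¹ Cᴴ = (fun z => (starRingEnd ℂ) z) '' numRange D C := by
    ext z
    constructor
    · rintro ⟨w, hw1, rfl⟩
      refine ⟨(starRingEnd ℂ) (ipW D⁻¹ w (Cᴴ *ᵥ w)), ⟨D⁻¹ *ᵥ w, ?_, ?_⟩, by simp⟩
      · show star (D⁻¹ *ᵥ w) ⬝ᵥ (D *ᵥ (D⁻¹ *ᵥ w)) = 1
        rw [mulVec_mulVec, key, hHi, hiD, mul_one]
        exact hw1
      · show (starRingEnd ℂ) _ = star (C *ᵥ (D⁻¹ *ᵥ w)) ⬝ᵥ (D *ᵥ (D⁻¹ *ᵥ w))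
        rw [mulVec_mulVec, mulVec_mulVec, key]
        show (starRingEnd ℂ) (star (Cᴴ *ᵥ w) ⬝ᵥ (D⁻¹ *ᵥ w)) = _
        rw [key, key_conj]
        congr 1
        rw [conjTranspose_conjTranspose, hiD, mul_one]
    · rintro ⟨z₀, ⟨v, hv1, rfl⟩, rfl⟩
      refine ⟨D *ᵥ v, ?_, ?_⟩
      · show star (D *ᵥ v) ⬝ᵥ (D⁻¹ *ᵥ (D *ᵥ v)) = 1
        rw [mulVec_mulVec, key, hH, hDi, mul_one]
        exact hv1
      · show (starRingEnd ℂ) (star (C *ᵥ v) ⬝ᵥ (D *ᵥ v)) =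
          star (Cᴴ *ᵥ (D *ᵥ v)) ⬝ᵥ (D⁻¹ *ᵥ (D *ᵥ v))
        rw [mulVec_mulVec, mulVec_mulVec, key, key, key_conj]
        congr 1
        rw [hDi, mul_one]
  refine ⟨hmain, ?_⟩
  rw [hmain]
  have := Metric.infDist_image (x := (0 : ℂ)) (t := numRange D C)
    Complex.isometry_conj
  simpa using this
end

section
/- Let C be an invertible n×n complex matrix, D an n×n Hermitian positive definite matrix, and suppose 0 ∉ W_D(C). Define cos β := dist(0, W_D(C)) / ‖C‖_D ∈ (0, 1] and sin β := √(1 − cos² β). Let d ∈ ℂⁿ, x⁰ ∈ ℂⁿ, r⁰ := d − C x⁰, and for m ≥ 1 let xᵐ ∈ x⁰ + K^m(C, r⁰) be the minimal-residual iterate, i.e. rᵐ := d − C xᵐ satisfies ‖rᵐ‖_D = min{ ‖d − C x‖_D : x ∈ x⁰ + K^m(C, r⁰) }. Then ‖rᵐ‖_D ≤ (sin β)ᵐ ‖r⁰‖_D. -/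
/-
Elman's argument. Writing `D = B⋆B` with `B` invertible, `v ↦ B v` carries `‖·‖_D` to the
Euclidean norm and `C` to `T = B C B⁻¹`, so that `W_D(C)` is the numerical range of `T` and
`‖C‖_D = ‖T‖`. The projection step `r ↦ r - α T r` with `α = ⟪T r, r⟫ / ‖T r‖²` leaves
`‖r‖² - |⟪T r, r⟫|² / ‖T r‖² ≤ (1 - cos² β) ‖r‖²`, because `|⟪T r, r⟫| ≥ dist(0, W_D(C)) ‖r‖²`
and `‖T r‖ ≤ ‖T‖ ‖r‖`. Such a step maps `x⁰ + K^m(C, r⁰)` into `x⁰ + K^{m+1}(C, r⁰)`, so `m` steps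
from `x⁰` give an admissible point with residual at most `sinᵐ β ‖r⁰‖_D`, which bounds the
minimal residual.
-/

open Matrix
open scoped ComplexOrder

/-- The E-weighted vector norm ‖v‖_E := (⟨v,v⟩_E)^{1/2}. -/
noncomputable def nW {n : ℕ} (E : Matrix (Fin n) (Fin n) ℂ) (v : Fin n → ℂ) : ℝ :=
  Real.sqrt ((ipW E v v).re)

/-- The operator norm induced by the E-weighted vector norm. -/
noncomputable def opNW {n : ℕ} (E M : Matrix (Fin n) (Fin n) ℂ) : ℝ :=
  sSup {x : ℝ | ∃ v : Fin n → ℂ, nW E v = 1 ∧ x = nW E (M *ᵥ v)}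

/-- The Krylov space K^m(C, r) := span{ C^j r : 0 ≤ j ≤ m−1 }. -/
noncomputable def krylov {n : ℕ} (C : Matrix (Fin n) (Fin n) ℂ) (r : Fin n → ℂ)
    (m : ℕ) : Submodule ℂ (Fin n → ℂ) :=
  Submodule.span ℂ {w | ∃ j < m, w = (C ^ j) *ᵥ r}

open scoped InnerProductSpace

section Projection

variable {𝕜 E : Type*} [RCLike 𝕜] [NormedAddCommGroup E] [InnerProductSpace 𝕜 E]

theorem norm_sub_inner_div_smul_sq (r t : E) :
    ‖r - (⟪t, r⟫_𝕜 / (‖t‖ ^ 2 : 𝕜)) • t‖ ^ 2 = ‖r‖ ^ 2 - ‖⟪t, r⟫_𝕜‖ ^ 2 / ‖t‖ ^ 2 := by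
  rcases eq_or_ne t 0 with rfl | ht
  · simp
  rw [@norm_sub_sq 𝕜, inner_smul_right, ← inner_conj_symm, norm_smul, norm_div, norm_pow,
    RCLike.norm_ofReal, abs_norm, div_mul_eq_mul_div, RCLike.conj_mul, ← RCLike.ofReal_pow,
    ← RCLike.ofReal_pow, ← RCLike.ofReal_div, RCLike.ofReal_re, RCLike.norm_conj]
  field_simp
  ring

theorem exists_norm_sub_smul_sq_le {r t : E} {κ K : ℝ} (hκ : 0 ≤ κ)
    (hrt : κ * ‖r‖ ^ 2 ≤ ‖⟪t, r⟫_𝕜‖) (ht : ‖t‖ ≤ K * ‖r‖) :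
    ∃ α : 𝕜, ‖r - α • t‖ ^ 2 ≤ (1 - (κ / K) ^ 2) * ‖r‖ ^ 2 := by
  rcases eq_or_ne t 0 with rfl | ht0
  · refine ⟨0, ?_⟩
    have hzero : κ * ‖r‖ ^ 2 = 0 := le_antisymm (by simpa using hrt) (by positivity)
    rcases mul_eq_zero.1 hzero with rfl | hr
    · simp
    · simp [hr]
  refine ⟨⟪t, r⟫_𝕜 / (‖t‖ ^ 2 : 𝕜), ?_⟩
  have hK : (κ / K) ^ 2 * ‖t‖ ^ 2 ≤ κ ^ 2 * ‖r‖ ^ 2 := by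
    rcases eq_or_ne K 0 with rfl | hK
    · rw [div_zero, zero_pow two_ne_zero, zero_mul]; positivity
    calc (κ / K) ^ 2 * ‖t‖ ^ 2 ≤ (κ / K) ^ 2 * (K * ‖r‖) ^ 2 := by
          gcongr
      _ = κ ^ 2 * ‖r‖ ^ 2 := by field_simp
  have hrt2 : (κ * ‖r‖ ^ 2) ^ 2 ≤ ‖⟪t, r⟫_𝕜‖ ^ 2 := by gcongr
  have hquot : (κ / K) ^ 2 * ‖r‖ ^ 2 ≤ ‖⟪t, r⟫_𝕜‖ ^ 2 / ‖t‖ ^ 2 := by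
    rw [le_div_iff₀ (by positivity)]
    nlinarith [mul_le_mul_of_nonneg_right hK (sq_nonneg ‖r‖)]
  rw [norm_sub_inner_div_smul_sq]
  linarith

theorem exists_norm_sub_smul_le {r t : E} {κ K : ℝ} (hκ : 0 ≤ κ)
    (hrt : κ * ‖r‖ ^ 2 ≤ ‖⟪t, r⟫_𝕜‖) (ht : ‖t‖ ≤ K * ‖r‖) :
    ∃ α : 𝕜, ‖r - α • t‖ ≤ √(1 - (κ / K) ^ 2) * ‖r‖ := by
  obtain ⟨α, hα⟩ := exists_norm_sub_smul_sq_le hκ hrt ht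
  refine ⟨α, ?_⟩
  rw [← Real.sqrt_sq (norm_nonneg (r - α • t)), ← Real.sqrt_sq (norm_nonneg r),
    ← Real.sqrt_mul' _ (sq_nonneg _)]
  exact Real.sqrt_le_sqrt hα

theorem infDist_zero_mul_norm_sq_le {S : Set 𝕜} (T : E →ₗ[𝕜] E)
    (hS : ∀ u, ‖u‖ = 1 → ⟪T u, u⟫_𝕜 ∈ S) (u : E) :
    Metric.infDist 0 S * ‖u‖ ^ 2 ≤ ‖⟪T u, u⟫_𝕜‖ := by
  rcases eq_or_ne u 0 with rfl | hu
  · simp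
  have hu' : 0 < ‖u‖ := norm_pos_iff.2 hu
  set c : 𝕜 := ((‖u‖⁻¹ : ℝ) : 𝕜)
  have hc : ‖c • u‖ = 1 := by
    rw [norm_smul, RCLike.norm_ofReal, abs_inv, abs_norm, inv_mul_cancel₀ hu'.ne']
  have hdist := Metric.infDist_le_dist_of_mem (x := (0 : 𝕜)) (hS _ hc)
  rw [dist_zero_left, map_smul, inner_smul_left, inner_smul_right, RCLike.conj_ofReal,
    norm_mul, norm_mul, RCLike.norm_ofReal, abs_inv, abs_norm] at hdist
  calc Metric.infDist 0 S * ‖u‖ ^ 2 ≤ ‖u‖⁻¹ * (‖u‖⁻¹ * ‖⟪T u, u⟫_𝕜‖) * ‖u‖ ^ 2 := by gcongr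
    _ = ‖⟪T u, u⟫_𝕜‖ := by field_simp

end Projection

open scoped MatrixOrder in
theorem exists_linearEquiv_inner_eq_ipW {n : ℕ} {D : Matrix (Fin n) (Fin n) ℂ} (hD : D.PosDef) :
    ∃ φ : (Fin n → ℂ) ≃ₗ[ℂ] EuclideanSpace ℂ (Fin n), ∀ v w, ⟪φ w, φ v⟫_ℂ = ipW D v w := by
  obtain ⟨B, hB, rfl⟩ :=
    CStarAlgebra.isStrictlyPositive_iff_eq_star_mul_self.mp hD.isStrictlyPositive
  refine ⟨(B.toLinearEquiv' hB.invertible).trans (WithLp.linearEquiv 2 ℂ (Fin n → ℂ)).symm, fun v w => ?_⟩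
  change B *ᵥ v ⬝ᵥ star (B *ᵥ w) = star w ⬝ᵥ (star B * B) *ᵥ v
  rw [← mulVec_mulVec, dotProduct_mulVec, star_mulVec, dotProduct_comm, star_eq_conjTranspose]

section Transport

variable {n : ℕ} {D : Matrix (Fin n) (Fin n) ℂ} {E : Type*} [NormedAddCommGroup E]
  [InnerProductSpace ℂ E] {φ : (Fin n → ℂ) ≃ₗ[ℂ] E}

theorem nW_eq_norm (hφ : ∀ v w, ⟪φ w, φ v⟫_ℂ = ipW D v w) (v : Fin n → ℂ) :
    nW D v = ‖φ v‖ := by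
  rw [nW, ← hφ, @norm_eq_sqrt_re_inner ℂ, RCLike.re_to_complex]

theorem inner_conj_mem_numRange (hφ : ∀ v w, ⟪φ w, φ v⟫_ℂ = ipW D v w)
    (C : Matrix (Fin n) (Fin n) ℂ) {u : E} (hu : ‖u‖ = 1) :
    ⟪φ.conj C.mulVecLin u, u⟫_ℂ ∈ numRange D C := by
  refine ⟨φ.symm u, ?_, ?_⟩
  · rw [← hφ, φ.apply_symm_apply, inner_self_eq_norm_sq_to_K, hu]
    simp
  · rw [← hφ, φ.apply_symm_apply, LinearEquiv.conj_apply_apply, mulVecLin_apply]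

theorem opNW_eq_norm_conj [FiniteDimensional ℂ E] (hφ : ∀ v w, ⟪φ w, φ v⟫_ℂ = ipW D v w)
    (C : Matrix (Fin n) (Fin n) ℂ) :
    opNW D C = ‖LinearMap.toContinuousLinearMap (φ.conj C.mulVecLin)‖ := by
  rw [← ContinuousLinearMap.sSup_sphere_eq_norm, opNW]
  congr 1
  ext x
  simp only [nW_eq_norm hφ, Set.mem_ofPred_eq, Set.mem_image, mem_sphere_zero_iff_norm,
    LinearMap.coe_toContinuousLinearMap', LinearEquiv.conj_apply_apply, mulVecLin_apply]
  constructor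
  · rintro ⟨v, hv, rfl⟩
    exact ⟨φ v, hv, by rw [φ.symm_apply_apply]⟩
  · rintro ⟨u, hu, rfl⟩
    exact ⟨φ.symm u, by rwa [φ.apply_symm_apply], rfl⟩

end Transport

section Krylov

variable {n : ℕ} (C : Matrix (Fin n) (Fin n) ℂ) (r : Fin n → ℂ)

theorem krylov_mono {k m : ℕ} (h : k ≤ m) : krylov C r k ≤ krylov C r m :=
  Submodule.span_mono fun _ ⟨j, hj, hw⟩ => ⟨j, hj.trans_le h, hw⟩

theorem self_mem_krylov {m : ℕ} (hm : 1 ≤ m) : r ∈ krylov C r m :=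
  Submodule.subset_span ⟨0, hm, by simp⟩

theorem mulVec_mem_krylov_succ {m : ℕ} {v : Fin n → ℂ} (hv : v ∈ krylov C r m) :
    C *ᵥ v ∈ krylov C r (m + 1) := by
  have : (krylov C r m).map C.mulVecLin ≤ krylov C r (m + 1) := by
    rw [krylov, Submodule.map_span, Submodule.span_le]
    rintro _ ⟨w, ⟨j, hj, rfl⟩, rfl⟩
    exact Submodule.subset_span ⟨j + 1, by omega, by simp [mulVec_mulVec, pow_succ']⟩
  exact this ⟨v, hv, rfl⟩

theorem residual_mem_krylov_succ (d : Fin n → ℂ) {x0 y : Fin n → ℂ} {m : ℕ}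
    (hy : y - x0 ∈ krylov C (d - C *ᵥ x0) m) :
    d - C *ᵥ y ∈ krylov C (d - C *ᵥ x0) (m + 1) := by
  have : d - C *ᵥ y = (d - C *ᵥ x0) - C *ᵥ (y - x0) := by
    rw [mulVec_sub]
    abel
  rw [this]
  exact sub_mem (self_mem_krylov C _ (by omega)) (mulVec_mem_krylov_succ C _ hy)

theorem exists_sub_mem_krylov_residual_le {N : (Fin n → ℂ) → ℝ} {s : ℝ} (hs : 0 ≤ s)
    (hstep : ∀ r, ∃ α : ℂ, N (r - α • C *ᵥ r) ≤ s * N r) (d x0 : Fin n → ℂ) (m : ℕ) :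
    ∃ y, y - x0 ∈ krylov C (d - C *ᵥ x0) m ∧
      N (d - C *ᵥ y) ≤ s ^ m * N (d - C *ᵥ x0) := by
  induction m with
  | zero => exact ⟨x0, by simp, by simp⟩
  | succ m ih =>
    obtain ⟨y, hy, hNy⟩ := ih
    obtain ⟨α, hα⟩ := hstep (d - C *ᵥ y)
    refine ⟨y + α • (d - C *ᵥ y), ?_, ?_⟩
    · rw [add_sub_right_comm]
      exact add_mem (krylov_mono C _ m.le_succ hy)
        (Submodule.smul_mem _ α (residual_mem_krylov_succ C d hy))
    · calc N (d - C *ᵥ (y + α • (d - C *ᵥ y)))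
          = N (d - C *ᵥ y - α • C *ᵥ (d - C *ᵥ y)) := by
            rw [mulVec_add, mulVec_smul, sub_add_eq_sub_sub]
        _ ≤ s * N (d - C *ᵥ y) := hα
        _ ≤ s * (s ^ m * N (d - C *ᵥ x0)) := by gcongr
        _ = s ^ (m + 1) * N (d - C *ᵥ x0) := by ring

end Krylov

theorem stmt13_general {n : ℕ} (C D : Matrix (Fin n) (Fin n) ℂ)
    (hD : D.PosDef)
    (d x0 : Fin n → ℂ) (x : ℕ → Fin n → ℂ)
    (hx : ∀ m, 1 ≤ m →
      x m - x0 ∈ krylov C (d - C *ᵥ x0) m ∧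
        ∀ y : Fin n → ℂ, y - x0 ∈ krylov C (d - C *ᵥ x0) m →
          nW D (d - C *ᵥ x m) ≤ nW D (d - C *ᵥ y))
    (m : ℕ) (hm : 1 ≤ m) :
    nW D (d - C *ᵥ x m) ≤
      Real.sqrt (1 - (Metric.infDist 0 (numRange D C) / opNW D C) ^ 2) ^ m *
        nW D (d - C *ᵥ x0) := by
  obtain ⟨φ, hφ⟩ := exists_linearEquiv_inner_eq_ipW hD
  set T := LinearMap.toContinuousLinearMap (φ.conj C.mulVecLin)
  have hT : ∀ v, T (φ v) = φ (C *ᵥ v) := by simp [T]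
  have hstep : ∀ r, ∃ α : ℂ, nW D (r - α • C *ᵥ r) ≤
      Real.sqrt (1 - (Metric.infDist 0 (numRange D C) / opNW D C) ^ 2) * nW D r := by
    intro r
    simp only [nW_eq_norm hφ, map_sub, map_smul, ← hT, opNW_eq_norm_conj hφ]
    exact exists_norm_sub_smul_le Metric.infDist_nonneg
      (infDist_zero_mul_norm_sq_le T.toLinearMap (fun u hu => inner_conj_mem_numRange hφ C hu) _)
      (T.le_opNorm _)
  obtain ⟨y, hy, hres⟩ := exists_sub_mem_krylov_residual_le C (Real.sqrt_nonneg _) hstep d x0 m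
  exact ((hx m hm).2 y hy).trans hres

/-- Elman-type convergence estimate for weighted GMRES: if 0 ∉ W_D(C), the
minimal-residual iterates satisfy ‖rᵐ‖_D ≤ (sin β)ᵐ ‖r⁰‖_D, where
cos β = dist(0, W_D(C))/‖C‖_D. -/
theorem stmt13 {n : ℕ} (C D : Matrix (Fin n) (Fin n) ℂ)
    (hC : IsUnit C.det) (hD : D.PosDef)
    (h0 : (0 : ℂ) ∉ numRange D C)
    (d x0 : Fin n → ℂ) (x : ℕ → Fin n → ℂ)
    (hx : ∀ m, 1 ≤ m →
      x m - x0 ∈ krylov C (d - C *ᵥ x0) m ∧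
        ∀ y : Fin n → ℂ, y - x0 ∈ krylov C (d - C *ᵥ x0) m →
          nW D (d - C *ᵥ x m) ≤ nW D (d - C *ᵥ y))
    (m : ℕ) (hm : 1 ≤ m) :
    nW D (d - C *ᵥ x m) ≤
      Real.sqrt (1 - (Metric.infDist 0 (numRange D C) / opNW D C) ^ 2) ^ m *
        nW D (d - C *ᵥ x0) :=
  stmt13_general C D hD d x0 x hx m hm
end
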